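/- Suppose H ⊆ 2^{[n]} is a 2-wise ⌈t + √t/2 − 5/4⌉-intersecting family, 0 < p ≤ p_0(t) = 2/(√(4t+9)−1), and t ≥ 241. Then μ_p(H) < (1/2) p^t. -/

import Mathlib

open Finset

/-- p-biased measure of a family on ground set of size `n` (= `[n]`). -/
def mu (p : ℝ) (n : ℕ) (G : Finset (Finset ℕ)) : ℝ :=
  ∑ A ∈ G, p ^ A.card * (1 - p) ^ (n - A.card)

/-- p-biased measure of a family on an arbitrary finite ground set `X`. -/
def muOn (p : ℝ) (X : Finset ℕ) (G : Finset (Finset ℕ)) : ℝ :=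
  ∑ A ∈ G, p ^ A.card * (1 - p) ^ (X.card - A.card)

/-- `F_0^t = {F ⊆ [n] : [t] ⊆ F}`. -/
def F0 (n t : ℕ) : Finset (Finset ℕ) :=
  (Finset.Icc 1 n).powerset.filter (fun F => Finset.Icc 1 t ⊆ F)

/-- `F_1^t = {F ⊆ [n] : |F ∩ [t+3]| ≥ t+2}`. -/
def F1 (n t : ℕ) : Finset (Finset ℕ) :=
  (Finset.Icc 1 n).powerset.filter (fun F => t + 2 ≤ (F ∩ Finset.Icc 1 (t + 3)).card)

/-- `F_2^t = {F ⊆ [n] : |F ∩ [t+6]| ≥ t+4}`. -/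
def F2 (n t : ℕ) : Finset (Finset ℕ) :=
  (Finset.Icc 1 n).powerset.filter (fun F => t + 4 ≤ (F ∩ Finset.Icc 1 (t + 6)).card)

/-- `p_0(t) = 2/(√(4t+9) − 1)`. -/
noncomputable def p0 (t : ℕ) : ℝ := 2 / (Real.sqrt (4 * t + 9) - 1)

/-- The family is `r`-wise `t`-intersecting: any `r` members (with repetition)
intersect in at least `t` elements. -/
def RWise (r t : ℕ) (G : Finset (Finset ℕ)) : Prop :=
  ∀ f : Fin r → Finset ℕ, (∀ k, f k ∈ G) → t ≤ (⋂ k, (f k : Set ℕ)).ncard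

/-- The shift `s_{i,j}` of a single set `A`, relative to the family `G`. -/
def shiftSet (i j : ℕ) (G : Finset (Finset ℕ)) (A : Finset ℕ) : Finset ℕ :=
  if A ∩ {i, j} = {j} ∧ (A.erase j ∪ {i}) ∉ G then A.erase j ∪ {i} else A

/-- The shifting operation `σ_{i,j}` applied to a family. -/
def shift (i j : ℕ) (G : Finset (Finset ℕ)) : Finset (Finset ℕ) :=
  G.image (shiftSet i j G)

/-- `G` and `H` are isomorphic as families on ground set `[n]`:
`H` is the image of `G` under a permutation preserving `[n]`. -/
def Iso (n : ℕ) (G H : Finset (Finset ℕ)) : Prop :=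
  ∃ τ : Equiv.Perm ℕ, (∀ x, x ∈ Finset.Icc 1 n ↔ τ x ∈ Finset.Icc 1 n) ∧
    H = G.image (fun A => A.image τ)

/-- `G` is `(3,t)`-maximal on `[n]`. -/
def Max3 (n t : ℕ) (G : Finset (Finset ℕ)) : Prop :=
  (∀ A ∈ G, A ⊆ Finset.Icc 1 n) ∧ RWise 3 t G ∧
    ∀ F : Finset ℕ, F ⊆ Finset.Icc 1 n → F ∉ G → ¬ RWise 3 t (insert F G)

/-- `G` is shifted on `[n]`. -/
def Shifted (n : ℕ) (G : Finset (Finset ℕ)) : Prop :=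
  ∀ i j : ℕ, 1 ≤ i → i < j → j ≤ n → shift i j G = G

/-- One shifting step. -/
def ShiftStep (n : ℕ) (G H : Finset (Finset ℕ)) : Prop :=
  ∃ i j : ℕ, 1 ≤ i ∧ i ≤ n ∧ 1 ≤ j ∧ j ≤ n ∧ H = shift i j G


/-!
A compression `shift i j` with `i < j` preserves the `p`-measure and the pairwise
`s`-intersection property, and lowers `∑ A ∈ G, ∑ x ∈ A, x`; so we may assume `H` is shifted.
Read a set `F` as a walk that steps up at `k ∈ F` and down at `k ∉ F`. In a shifted pairwise
`s`-intersecting family every walk reaches height `s`: otherwise, starting from `F' = F`, one can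
keep moving the largest element of `F ∩ F'` to the largest hole of `F ∪ F'` below it, staying in
the family while keeping `#(F ∩ [m]) + #(F' ∩ [m]) < m + s` for all `m`, which cannot go on
forever. A `p`-biased walk reaches height `s` with probability at most `(p/q)^s`, hence
`μ_p(H) ≤ (p/q)^s` with `s = t + ⌈√t/2 - 5/4⌉`. As `p/q` and `1/q` increase with `p`, it remains
to check `(1/q₀)^t (p₀/q₀)^(s-t) < 1/2` at `p₀ = 1/(r+1)`, where `t = r² + 3r`; taking logarithms
this is a cubic inequality in `r`, only just true at `t = 241`.
-/

lemma muOn_le_one {p : ℝ} (hp : 0 ≤ p) (hp1 : p ≤ 1) {X : Finset ℕ} {G : Finset (Finset ℕ)}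
    (hG : ∀ A ∈ G, A ⊆ X) : muOn p X G ≤ 1 :=
  calc muOn p X G ≤ muOn p X X.powerset :=
        sum_le_sum_of_subset_of_nonneg (fun A hA => mem_powerset.2 (hG A hA))
          fun A _ _ => mul_nonneg (pow_nonneg hp _) (pow_nonneg (sub_nonneg.2 hp1) _)
    _ = 1 := by rw [muOn, sum_pow_mul_eq_add_pow, add_sub_cancel, one_pow]

lemma muOn_insert (p : ℝ) {x : ℕ} {X : Finset ℕ} (hx : x ∉ X) {G : Finset (Finset ℕ)}
    (hG : ∀ A ∈ G, A ⊆ insert x X) :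
    muOn p (insert x X) G = p * muOn p X ((G.filter (x ∈ ·)).image (·.erase x)) +
      (1 - p) * muOn p X (G.filter (x ∉ ·)) := by
  have hinj : Set.InjOn (fun A : Finset ℕ => A.erase x) (G.filter (x ∈ ·)) := fun A hA B hB =>
    erase_injOn' x (mem_filter.1 hA).2 (mem_filter.1 hB).2
  rw [muOn, ← sum_filter_add_sum_filter_not G (x ∈ ·), muOn, muOn, sum_image hinj,
    mul_sum, mul_sum, card_insert_of_notMem hx]
  congr 1
  · refine sum_congr rfl fun A hA => ?_
    have hxA := (mem_filter.1 hA).2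
    have hAX : #A ≤ #X + 1 := (card_le_card (hG A (mem_filter.1 hA).1)).trans (card_insert_le _ _)
    have hA0 : 1 ≤ #A := card_pos.2 ⟨x, hxA⟩
    rw [card_erase_of_mem hxA, show #X + 1 - #A = #X - (#A - 1) by omega,
      ← mul_assoc, ← pow_succ', Nat.sub_add_cancel hA0]
  · refine sum_congr rfl fun A hA => ?_
    have hAX : A ⊆ X :=
      (subset_insert_iff_of_notMem (mem_filter.1 hA).2).1 (hG A (mem_filter.1 hA).1)
    rw [show #X + 1 - #A = #X - #A + 1 by have := card_le_card hAX; omega, pow_succ]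
    ring

/-- The walk which, for `k = a + 1, a + 2, …` in turn, steps up if `k ∈ F` and down otherwise,
reaches height `s`: after `m` steps it is at height `2 #(F ∩ (a, a + m]) - m`. -/
def WalkReaches (a s : ℕ) (F : Finset ℕ) : Prop :=
  ∃ m, m + s ≤ 2 * #(F ∩ Ioc a (a + m))

lemma card_inter_Ioc_add_card_inter_Ioc (F : Finset ℕ) {a b c : ℕ} (hab : a ≤ b) (hbc : b ≤ c) :
    #(F ∩ Ioc a b) + #(F ∩ Ioc b c) = #(F ∩ Ioc a c) := by
  rw [← card_union_of_disjoint, ← inter_union_distrib_left, Ioc_union_Ioc_eq_Ioc hab hbc]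
  exact (Ioc_disjoint_Ioc_of_le le_rfl).mono inter_subset_right inter_subset_right

lemma card_inter_Ioc_succ (F : Finset ℕ) (a k : ℕ) :
    #(F ∩ Ioc a (a + (k + 1))) = #(F ∩ {a + 1}) + #(F ∩ Ioc (a + 1) (a + 1 + k)) := by
  rw [← card_inter_Ioc_add_card_inter_Ioc F (Nat.le_succ a) (by omega : a + 1 ≤ a + (k + 1)),
    Nat.Ioc_succ_singleton, show a + (k + 1) = a + 1 + k by ring]

lemma WalkReaches.exists_first_step {a s : ℕ} {F : Finset ℕ} (h : WalkReaches a (s + 1) F) :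
    ∃ k, k + s + 2 ≤ 2 * #(F ∩ {a + 1}) + 2 * #(F ∩ Ioc (a + 1) (a + 1 + k)) := by
  obtain ⟨_ | k, hk⟩ := h
  · simp at hk
  · refine ⟨k, ?_⟩
    rw [card_inter_Ioc_succ] at hk
    omega

lemma WalkReaches.erase_succ {a s : ℕ} {F : Finset ℕ} (h : WalkReaches a (s + 1) F) :
    WalkReaches (a + 1) s (F.erase (a + 1)) := by
  obtain ⟨k, hk⟩ := h.exists_first_step
  refine ⟨k, ?_⟩
  have : #(F ∩ {a + 1}) ≤ 1 := (card_le_card inter_subset_right).trans (card_singleton _).le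
  rw [erase_inter, erase_eq_of_notMem fun h => by simp at h]
  omega

lemma WalkReaches.succ_of_notMem {a s : ℕ} {F : Finset ℕ} (ha : a + 1 ∉ F)
    (h : WalkReaches a (s + 1) F) : WalkReaches (a + 1) (s + 2) F := by
  obtain ⟨k, hk⟩ := h.exists_first_step
  refine ⟨k, ?_⟩
  rw [inter_singleton_of_notMem ha] at hk
  simp only [card_empty] at hk
  omega

theorem muOn_le_of_walkReaches {p : ℝ} (hp : 0 ≤ p) (hp1 : p < 1) (N a s : ℕ)
    {G : Finset (Finset ℕ)} (hG : ∀ A ∈ G, A ⊆ Ioc a (a + N))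
    (hwalk : ∀ F ∈ G, WalkReaches a s F) : muOn p (Ioc a (a + N)) G ≤ (p / (1 - p)) ^ s := by
  have hq : 0 < 1 - p := sub_pos.2 hp1
  induction N generalizing a s G with
  | zero =>
    rcases s with _ | s
    · simpa using muOn_le_one hp hp1.le hG
    have hG0 : G = ∅ := eq_empty_of_forall_notMem fun F hF => by
      obtain ⟨k, hk⟩ := (hwalk F hF).exists_first_step
      simp [subset_empty.1 (by simpa using hG F hF)] at hk
    rw [hG0, muOn, sum_empty]
    positivity
  | succ N ih =>
    rcases s with _ | s
    · simpa using muOn_le_one hp hp1.le hG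
    have hIoc : Ioc a (a + (N + 1)) = insert (a + 1) (Ioc (a + 1) (a + 1 + N)) := by
      ext x
      simp only [mem_Ioc, mem_insert]
      omega
    rw [hIoc] at hG ⊢
    rw [muOn_insert p (by simp) hG]
    have hin := ih (a + 1) s (G := (G.filter (a + 1 ∈ ·)).image (·.erase (a + 1)))
      (by
        simp only [mem_image, mem_filter]
        rintro _ ⟨F, ⟨hF, -⟩, rfl⟩
        exact subset_insert_iff.1 (hG F hF))
      (by
        simp only [mem_image, mem_filter]
        rintro _ ⟨F, ⟨hF, -⟩, rfl⟩
        exact (hwalk F hF).erase_succ)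
    have hout := ih (a + 1) (s + 2) (G := G.filter (a + 1 ∉ ·))
      (fun F hF => (subset_insert_iff_of_notMem (mem_filter.1 hF).2).1 (hG F (mem_filter.1 hF).1))
      (fun F hF => (hwalk F (mem_filter.1 hF).1).succ_of_notMem (mem_filter.1 hF).2)
    calc _ ≤ p * (p / (1 - p)) ^ s + (1 - p) * (p / (1 - p)) ^ (s + 2) := by gcongr
      _ = (p / (1 - p)) ^ s * (p + (1 - p) * (p / (1 - p)) ^ 2) := by ring
      _ = (p / (1 - p)) ^ (s + 1) := by
        rw [pow_succ]
        congr 1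
        field_simp
        ring

lemma rwise_two_iff {s : ℕ} {G : Finset (Finset ℕ)} :
    RWise 2 s G ↔ ∀ A ∈ G, ∀ B ∈ G, s ≤ #(A ∩ B) := by
  have hcoe : ∀ f : Fin 2 → Finset ℕ, (⋂ k, (f k : Set ℕ)) = ↑(f 0 ∩ f 1) := fun f => by
    ext x
    simp [Fin.forall_fin_two]
  simp only [RWise, hcoe, Set.ncard_coe_finset]
  refine ⟨fun h A hA B hB => h ![A, B] (Fin.forall_fin_two.2 ⟨hA, hB⟩), fun h f hf => ?_⟩
  exact h _ (hf 0) _ (hf 1)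

section Shift

variable {i j : ℕ} {G : Finset (Finset ℕ)} {A B : Finset ℕ}

lemma inter_pair_eq_singleton_iff (hij : i ≠ j) : A ∩ {i, j} = {j} ↔ j ∈ A ∧ i ∉ A := by
  simp only [Finset.ext_iff, mem_inter, mem_insert, mem_singleton]
  constructor
  · intro h
    exact ⟨((h j).2 rfl).1, fun hi => hij ((h i).1 ⟨hi, Or.inl rfl⟩)⟩
  · rintro ⟨hj, hi⟩ x
    constructor
    · rintro ⟨hx, rfl | rfl⟩
      exacts [absurd hx hi, rfl]
    · rintro rfl
      exact ⟨hj, Or.inr rfl⟩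

lemma shiftSet_eq_ite (hij : i ≠ j) : shiftSet i j G A =
    if j ∈ A ∧ i ∉ A ∧ insert i (A.erase j) ∉ G then insert i (A.erase j) else A := by
  simp only [shiftSet, inter_pair_eq_singleton_iff hij, union_comm _ {i}, ← insert_eq, and_assoc]

lemma card_insert_erase (hj : j ∈ A) (hi : i ∉ A) : #(insert i (A.erase j)) = #A := by
  rw [card_insert_of_notMem fun h => hi (mem_of_mem_erase h), card_erase_add_one hj]

lemma sum_insert_erase_add (hj : j ∈ A) (hi : i ∉ A) :
    ∑ x ∈ insert i (A.erase j), x + j = ∑ x ∈ A, x + i := by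
  rw [sum_insert fun h => hi (mem_of_mem_erase h), add_assoc, sum_erase_add _ _ hj, add_comm]

lemma insert_erase_insert_erase (hj : j ∈ A) (hi : i ∉ A) :
    insert j ((insert i (A.erase j)).erase i) = A := by
  rw [erase_insert fun h => hi (mem_of_mem_erase h), insert_erase hj]

lemma card_insert_erase_inter_add (hj : j ∈ A) (hi : i ∉ A) (B : Finset ℕ) :
    #(insert i (A.erase j) ∩ B) + (if j ∈ B then 1 else 0) =
      #(A ∩ B) + (if i ∈ B then 1 else 0) := by
  have hiAB : i ∉ (A ∩ B).erase j := fun h => hi (mem_inter.1 (mem_of_mem_erase h)).1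
  by_cases hiB : i ∈ B <;> by_cases hjB : j ∈ B <;>
    simp only [insert_inter_of_mem, insert_inter_of_notMem, erase_inter, hiB, hjB,
      card_insert_of_notMem hiAB, if_true, if_false, not_false_eq_true]
  · rw [card_erase_add_one (mem_inter.2 ⟨hj, hjB⟩)]
  · rw [erase_eq_of_notMem fun h => hjB (mem_inter.1 h).2]
  · rw [card_erase_add_one (mem_inter.2 ⟨hj, hjB⟩), add_zero]
  · rw [erase_eq_of_notMem fun h => hjB (mem_inter.1 h).2]

lemma card_shiftSet (hij : i ≠ j) : #(shiftSet i j G A) = #A := by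
  rw [shiftSet_eq_ite hij]
  split_ifs with h
  exacts [card_insert_erase h.1 h.2.1, rfl]

lemma shiftSet_injOn (hij : i ≠ j) : Set.InjOn (shiftSet i j G) G := by
  intro A hA B hB h
  simp only [shiftSet_eq_ite hij] at h
  split_ifs at h with hAm hBm hBm
  · rw [← insert_erase_insert_erase hAm.1 hAm.2.1, h, insert_erase_insert_erase hBm.1 hBm.2.1]
  · exact absurd (h ▸ hB) hAm.2.2
  · exact absurd (h.symm ▸ hA) hBm.2.2
  · exact h

lemma mu_shift (p : ℝ) (n : ℕ) (hij : i ≠ j) : mu p n (shift i j G) = mu p n G := by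
  rw [mu, mu, shift, sum_image (shiftSet_injOn hij)]
  simp only [card_shiftSet hij]

lemma subset_Icc_of_mem_shift {n : ℕ} (hi : 1 ≤ i) (hin : i ≤ n) (hG : ∀ A ∈ G, A ⊆ Icc 1 n)
    (hA : A ∈ shift i j G) : A ⊆ Icc 1 n := by
  obtain ⟨B, hB, rfl⟩ := mem_image.1 hA
  rw [shiftSet]
  split_ifs
  · rw [union_comm, ← insert_eq]
    exact insert_subset (mem_Icc.2 ⟨hi, hin⟩) ((erase_subset _ _).trans (hG B hB))
  · exact hG B hB

lemma sum_sum_shift_lt (hij : i < j) (hne : shift i j G ≠ G) :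
    ∑ A ∈ shift i j G, ∑ x ∈ A, x < ∑ A ∈ G, ∑ x ∈ A, x := by
  have hle : ∀ A ∈ G, ∑ x ∈ shiftSet i j G A, x ≤ ∑ x ∈ A, x ∧
      (shiftSet i j G A ≠ A → ∑ x ∈ shiftSet i j G A, x < ∑ x ∈ A, x) := fun A _ => by
    rw [shiftSet_eq_ite hij.ne]
    split_ifs with h
    · have := sum_insert_erase_add h.1 h.2.1
      omega
    · simp
  obtain ⟨A, hA, hAne⟩ : ∃ A ∈ G, shiftSet i j G A ≠ A := by
    by_contra! h
    exact hne ((image_congr h).trans image_id)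
  rw [shift, sum_image (shiftSet_injOn hij.ne)]
  exact sum_lt_sum (fun A hA => (hle A hA).1) ⟨A, hA, (hle A hA).2 hAne⟩

lemma insert_erase_mem_of_shiftSet_eq (hij : i ≠ j) (hB : shiftSet i j G B = B) (hj : j ∈ B)
    (hi : i ∉ B) : insert i (B.erase j) ∈ G := by
  by_contra hM
  rw [shiftSet_eq_ite hij, if_pos ⟨hj, hi, hM⟩] at hB
  exact hi (hB ▸ mem_insert_self i _)

lemma le_card_shiftSet_inter {s : ℕ} (hij : i ≠ j) (hG : ∀ A ∈ G, ∀ B ∈ G, s ≤ #(A ∩ B))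
    (hA : A ∈ G) (hB : B ∈ G) (hBfix : shiftSet i j G B = B) :
    s ≤ #(shiftSet i j G A ∩ B) := by
  rw [shiftSet_eq_ite hij]
  split_ifs with hAm
  swap
  · exact hG A hA B hB
  obtain ⟨hjA, hiA, -⟩ := hAm
  have hAB := card_insert_erase_inter_add hjA hiA B
  have := hG A hA B hB
  by_cases hjB : j ∈ B
  · by_cases hiB : i ∈ B
    · simp only [hiB, hjB, if_true] at hAB
      omega
    · have hBA := card_insert_erase_inter_add hjB hiB A
      have := hG A hA _ (insert_erase_mem_of_shiftSet_eq hij hBfix hjB hiB)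
      simp only [hiA, hjA, hiB, hjB, if_true, if_false, inter_comm B A,
        inter_comm (insert i (B.erase j)) A] at hAB hBA
      omega
  · simp only [hjB, if_false] at hAB
    omega

lemma card_shiftSet_inter_of_ne (hij : i ≠ j) (hA : shiftSet i j G A ≠ A)
    (hB : shiftSet i j G B ≠ B) : #(shiftSet i j G A ∩ shiftSet i j G B) = #(A ∩ B) := by
  simp only [shiftSet_eq_ite hij] at hA hB ⊢
  split_ifs at hA hB ⊢ with hAm hBm
  · have h1 := card_insert_erase_inter_add hAm.1 hAm.2.1 (insert i (B.erase j))
    have h2 := card_insert_erase_inter_add hBm.1 hBm.2.1 A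
    simp only [mem_insert, mem_erase, hij, hij.symm, hAm.1, hAm.2.1, ne_eq, not_true, true_or,
      false_and, or_self, if_true, if_false, inter_comm (insert i (B.erase j)) A,
      inter_comm B A] at h1 h2
    omega
  all_goals exact absurd rfl ‹_›

lemma rwise_two_shift {s : ℕ} (hij : i ≠ j) (h : RWise 2 s G) : RWise 2 s (shift i j G) := by
  rw [rwise_two_iff] at h ⊢
  simp only [shift, mem_image]
  rintro _ ⟨A, hA, rfl⟩ _ ⟨B, hB, rfl⟩
  by_cases hBfix : shiftSet i j G B = B
  · rw [hBfix]
    exact le_card_shiftSet_inter hij h hA hB hBfix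
  by_cases hAfix : shiftSet i j G A = A
  · rw [hAfix, inter_comm]
    exact le_card_shiftSet_inter hij h hB hA hAfix
  · exact card_shiftSet_inter_of_ne hij hAfix hBfix ▸ h A hA B hB

end Shift

theorem exists_shifted {n s : ℕ} {G : Finset (Finset ℕ)} (hG : ∀ A ∈ G, A ⊆ Icc 1 n)
    (hint : RWise 2 s G) : ∃ G' : Finset (Finset ℕ), (∀ A ∈ G', A ⊆ Icc 1 n) ∧ RWise 2 s G' ∧
      Shifted n G' ∧ ∀ p, mu p n G' = mu p n G := by
  induction hw : ∑ A ∈ G, ∑ x ∈ A, x using Nat.strong_induction_on generalizing G with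
  | _ w ih =>
    by_cases hsh : Shifted n G
    · exact ⟨G, hG, hint, hsh, fun _ => rfl⟩
    simp only [Shifted, not_forall] at hsh
    obtain ⟨i, j, hi, hij, hjn, hne⟩ := hsh
    obtain ⟨G', hG', hint', hsh', hmu⟩ := ih _ (hw ▸ sum_sum_shift_lt hij hne)
      (fun A hA => subset_Icc_of_mem_shift hi (by omega) hG hA) (rwise_two_shift hij.ne hint) rfl
    exact ⟨G', hG', hint', hsh', fun p => (hmu p).trans (mu_shift p n hij.ne)⟩

lemma Shifted.insert_erase_mem {n : ℕ} {G : Finset (Finset ℕ)} (hG : Shifted n G)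
    {F : Finset ℕ} (hF : F ∈ G) {i j : ℕ} (hi : 1 ≤ i) (hij : i < j) (hjn : j ≤ n) (hj : j ∈ F)
    (hiF : i ∉ F) : insert i (F.erase j) ∈ G := by
  by_contra hM
  have := mem_image_of_mem (shiftSet i j G) hF
  rw [← shift, hG i j hi hij hjn, shiftSet_eq_ite hij.ne, if_pos ⟨hj, hiF, hM⟩] at this
  exact hM this

lemma card_inter_add_card_inter (X Y S : Finset ℕ) :
    #(X ∩ S) + #(Y ∩ S) = #((X ∪ Y) ∩ S) + #(X ∩ Y ∩ S) := by
  rw [← card_union_add_card_inter, ← union_inter_distrib_right, ← inter_inter_distrib_right]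

lemma exists_max_notMem_Ioc {X : Finset ℕ} {j : ℕ} (h : #(X ∩ Ioc 0 j) < j) :
    ∃ i ∈ Ioc 0 j, i ∉ X ∧ ∀ x, i < x → x ≤ j → x ∈ X := by
  have hD : (Ioc 0 j \ X).Nonempty := by
    rw [sdiff_nonempty]
    intro hsub
    rw [inter_eq_right.2 hsub, Nat.card_Ioc] at h
    omega
  obtain ⟨hi, hiX⟩ := mem_sdiff.1 ((Ioc 0 j \ X).max'_mem hD)
  refine ⟨_, hi, hiX, fun x hix hxj => ?_⟩
  by_contra hxX
  have := (Ioc 0 j \ X).le_max' x (mem_sdiff.2 ⟨mem_Ioc.2 ⟨by omega, hxj⟩, hxX⟩)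
  omega

lemma add_card_inter_Ioc_le {F F' : Finset ℕ} {m j : ℕ} (hj : j ∈ F ∩ F') (hmj : m < j)
    (hfull : Ioc m j ⊆ F ∪ F') :
    #(F ∩ Ioc 0 m) + #(F' ∩ Ioc 0 m) + (j - m) + 1 ≤ #(F ∩ Ioc 0 j) + #(F' ∩ Ioc 0 j) := by
  rw [← card_inter_Ioc_add_card_inter_Ioc F (Nat.zero_le m) hmj.le,
    ← card_inter_Ioc_add_card_inter_Ioc F' (Nat.zero_le m) hmj.le]
  have hsplit := card_inter_add_card_inter F F' (Ioc m j)
  have hmid : j ∈ F ∩ F' ∩ Ioc m j := mem_inter.2 ⟨hj, mem_Ioc.2 ⟨hmj, le_rfl⟩⟩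
  rw [inter_eq_right.2 hfull, Nat.card_Ioc] at hsplit
  have := card_pos.2 ⟨j, hmid⟩
  omega

lemma exists_gap_below_max_inter {F F' : Finset ℕ} {s : ℕ} (hF : ∀ x ∈ F, 0 < x)
    (hs : s ≤ #(F ∩ F')) (hinv : ∀ m, #(F ∩ Ioc 0 m) + #(F' ∩ Ioc 0 m) < m + s) :
    ∃ i j, j ∈ F ∩ F' ∧ i ∉ F ∪ F' ∧ 0 < i ∧ i < j ∧ ∀ x, i < x → x ≤ j → x ∈ F ∪ F' := by
  have hne : (F ∩ F').Nonempty := card_pos.1 <| by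
    have := hinv 0
    simp only [Ioc_self, inter_empty, card_empty] at this
    omega
  set j := (F ∩ F').max' hne
  have hj : j ∈ F ∩ F' := (F ∩ F').max'_mem hne
  have hFF'j : F ∩ F' ∩ Ioc 0 j = F ∩ F' := inter_eq_left.2 fun x hx =>
    mem_Ioc.2 ⟨hF x (mem_inter.1 hx).1, (F ∩ F').le_max' x hx⟩
  have hgap : #((F ∪ F') ∩ Ioc 0 j) < j := by
    have := card_inter_add_card_inter F F' (Ioc 0 j)
    have := hinv j
    rw [hFF'j] at *
    omega
  obtain ⟨i, hi, hiFF', hfull⟩ := exists_max_notMem_Ioc hgap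
  refine ⟨i, j, hj, hiFF', (mem_Ioc.1 hi).1, lt_of_le_of_ne (mem_Ioc.1 hi).2 ?_, hfull⟩
  exact fun h => hiFF' (h ▸ mem_union_left F' (mem_inter.1 hj).1)

lemma Shifted.exists_sum_lt {n s : ℕ} {G : Finset (Finset ℕ)} (hG : Shifted n G)
    (hsub : ∀ A ∈ G, A ⊆ Icc 1 n) (hint : ∀ A ∈ G, ∀ B ∈ G, s ≤ #(A ∩ B)) {F F' : Finset ℕ}
    (hF : F ∈ G) (hF' : F' ∈ G) (hinv : ∀ m, #(F ∩ Ioc 0 m) + #(F' ∩ Ioc 0 m) < m + s) :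
    ∃ F'' ∈ G, ∑ x ∈ F'', x < ∑ x ∈ F', x ∧
      ∀ m, #(F ∩ Ioc 0 m) + #(F'' ∩ Ioc 0 m) < m + s := by
  obtain ⟨i, j, hj, hiFF', hi0, hij, hfull⟩ := exists_gap_below_max_inter
    (fun x hx => (mem_Icc.1 (hsub F hF hx)).1) (hint F hF F' hF') hinv
  have hjF' := (mem_inter.1 hj).2
  have hiF' : i ∉ F' := fun h => hiFF' (mem_union_right F h)
  refine ⟨_, hG.insert_erase_mem hF' hi0 hij (mem_Icc.1 (hsub F' hF' hjF')).2 hjF' hiF', ?_,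
    fun m => ?_⟩
  · have := sum_insert_erase_add hjF' hiF'
    omega
  have hcount := card_insert_erase_inter_add hjF' hiF' (Ioc 0 m)
  have := hinv m
  simp only [mem_Ioc, hi0, show 0 < j by omega, true_and] at hcount
  by_cases hmi : m < i
  · simp only [show ¬ j ≤ m by omega, show ¬ i ≤ m by omega, if_false] at hcount
    omega
  by_cases hjm : j ≤ m
  · simp only [hjm, show i ≤ m by omega, if_true] at hcount
    omega
  · simp only [hjm, show i ≤ m by omega, if_true, if_false] at hcount
    have := add_card_inter_Ioc_le hj (by omega : m < j)
      fun x hx => hfull x (by simp only [mem_Ioc] at hx; omega) (mem_Ioc.1 hx).2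
    have := hinv j
    omega

theorem Shifted.walkReaches {n s : ℕ} {G : Finset (Finset ℕ)} (hG : Shifted n G)
    (hsub : ∀ A ∈ G, A ⊆ Icc 1 n) (hint : RWise 2 s G) {F : Finset ℕ} (hF : F ∈ G) :
    WalkReaches 0 s F := by
  rw [rwise_two_iff] at hint
  by_contra hwalk
  simp only [WalkReaches, not_exists, not_le, zero_add] at hwalk
  suffices ∀ w, ∀ F' ∈ G, ∑ x ∈ F', x = w →
      ¬ ∀ m, #(F ∩ Ioc 0 m) + #(F' ∩ Ioc 0 m) < m + s from
    this _ F hF rfl fun m => by linarith [hwalk m]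
  intro w
  induction w using Nat.strong_induction_on with
  | _ w ih =>
    rintro F' hF' rfl hinv
    obtain ⟨F'', hF'', hlt, hinv''⟩ := hG.exists_sum_lt hsub hint hF hF' hinv
    exact ih _ hlt F'' hF'' rfl hinv''

theorem mu_le_of_rwise_two {p : ℝ} (hp : 0 ≤ p) (hp1 : p < 1) {n s : ℕ}
    {G : Finset (Finset ℕ)} (hG : ∀ A ∈ G, A ⊆ Icc 1 n) (hint : RWise 2 s G) :
    mu p n G ≤ (p / (1 - p)) ^ s := by
  obtain ⟨G', hG', hint', hsh, hmu⟩ := exists_shifted hG hint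
  have hIcc : Icc 1 n = Ioc 0 (0 + n) := by
    ext
    simp only [mem_Icc, mem_Ioc]
    omega
  have hmuOn : mu p n G' = muOn p (Ioc 0 (0 + n)) G' := by simp [mu, muOn]
  rw [← hmu, hmuOn]
  exact muOn_le_of_walkReaches hp hp1 n 0 s (hIcc ▸ hG') fun F hF => hsh.walkReaches hG' hint' hF

lemma log_one_add_le {x : ℝ} (hx : 0 ≤ x) (hx5 : x ≤ 1 / 5) :
    Real.log (1 + x) ≤ x - x ^ 2 / 2 + x ^ 3 / 3 := by
  have hx1 : |-x| < 1 := by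
    rw [abs_neg, abs_of_nonneg hx]
    linarith
  have h := Real.abs_log_sub_add_sum_range_le hx1 4
  simp only [Finset.sum_range_succ, Finset.sum_range_zero, abs_neg, abs_of_nonneg hx,
    sub_neg_eq_add] at h
  have hrem : x ^ 5 / (1 - x) ≤ x ^ 4 / 4 := by
    rw [div_le_div_iff₀ (by linarith) (by norm_num)]
    nlinarith [pow_nonneg hx 4]
  have := (abs_le.1 (h.trans hrem)).2
  norm_num at this
  nlinarith [pow_nonneg hx 4]

lemma le_log_14_0964 : (2.6458 : ℝ) ≤ Real.log 14.0964 := by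
  have h16 : Real.log 16 = 4 * Real.log 2 := by
    rw [show (16 : ℝ) = 2 ^ 4 by norm_num, Real.log_pow, Nat.cast_ofNat]
  have hquot : Real.log (16 / 14.0964) ≤ 4759 / 35241 - (4759 / 35241) ^ 2 / 2 +
      (4759 / 35241) ^ 3 / 3 := by
    rw [show (16 / 14.0964 : ℝ) = 1 + 4759 / 35241 by norm_num]
    exact log_one_add_le (by norm_num) (by norm_num)
  rw [Real.log_div (by norm_num) (by norm_num), h16] at hquot
  linarith [Real.log_two_gt_d9]

lemma mul_log_one_add_inv_le {r : ℝ} (hr : 5 ≤ r) :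
    (r ^ 2 + 3 * r) * Real.log (1 + 1 / r) ≤ r + 5 / 2 - 7 / (6 * r) + 1 / r ^ 2 := by
  have hr0 : 0 < r := by linarith
  calc (r ^ 2 + 3 * r) * Real.log (1 + 1 / r)
      ≤ (r ^ 2 + 3 * r) * (1 / r - (1 / r) ^ 2 / 2 + (1 / r) ^ 3 / 3) := by
        gcongr
        exact log_one_add_le (by positivity) (by rw [div_le_div_iff₀ hr0 (by norm_num)]; linarith)
    _ = r + 5 / 2 - 7 / (6 * r) + 1 / r ^ 2 := by
        field_simp
        ring

lemma one_add_inv_pow_mul_inv_pow_lt_half {r : ℝ} (hr : 14.0964 ≤ r) {t d : ℕ}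
    (htr : (t : ℝ) = r ^ 2 + 3 * r) (hd : r / 2 - 1 / 2 - 9 / (16 * r) ≤ d) :
    (1 + 1 / r) ^ t * (1 / r) ^ d < 1 / 2 := by
  have hr0 : 0 < r := by linarith
  have hlog_inv : ∀ x : ℝ, Real.log (1 / x) = -Real.log x := fun x => by
    rw [one_div, Real.log_inv]
  rw [← Real.log_lt_log_iff (by positivity) (by norm_num), Real.log_mul (by positivity)
    (by positivity), Real.log_pow, Real.log_pow, hlog_inv, hlog_inv, htr]
  have hlogr : 2.6458 ≤ Real.log r := le_log_14_0964.trans (Real.log_le_log (by norm_num) hr)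
  have hdlogr : (r / 2 - 1 / 2 - 9 / (16 * r)) * 2.6458 ≤ d * Real.log r :=
    mul_le_mul hd hlogr (by norm_num) (Nat.cast_nonneg d)
  have hcubic : 0 < 0.3229 * r ^ 3 - 4.5160471808 * r ^ 2 - 77183 / 240000 * r - 1 := by
    nlinarith [mul_nonneg (mul_nonneg (sub_nonneg.2 hr) (sub_nonneg.2 hr)) (sub_nonneg.2 hr),
      mul_nonneg (mul_nonneg (sub_nonneg.2 hr) hr0.le) hr0.le, mul_nonneg (sub_nonneg.2 hr) hr0.le]
  have hgap : (r / 2 - 1 / 2 - 9 / (16 * r)) * 2.6458 -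
      (r + 5 / 2 - 7 / (6 * r) + 1 / r ^ 2 + 0.6931471808) =
      (0.3229 * r ^ 3 - 4.5160471808 * r ^ 2 - 77183 / 240000 * r - 1) / r ^ 2 := by
    field_simp
    ring
  linarith [mul_log_one_add_inv_le (by linarith : 5 ≤ r), Real.log_two_lt_d9,
    div_pos hcubic (pow_pos hr0 2)]

lemma sub_le_sqrt_sq_add {r : ℝ} (hr : 3 / 8 ≤ r) :
    r + 3 / 2 - 9 / (8 * r) ≤ √(r ^ 2 + 3 * r) := by
  refine (le_abs_self _).trans (Real.abs_le_sqrt ?_)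
  have hr0 : 0 < r := by linarith
  have hsq : (r + 3 / 2 - 9 / (8 * r)) ^ 2 = r ^ 2 + 3 * r - (27 / 8 - 81 / (64 * r)) / r := by
    field_simp
    ring
  have : 0 ≤ (27 / 8 - 81 / (64 * r)) / r :=
    div_nonneg (by rw [sub_nonneg, div_le_iff₀ (by positivity)]; nlinarith) hr0.le
  linarith

lemma p0_lt_one {t : ℕ} (ht : 0 < t) : p0 t < 1 := by
  have h3 : 3 < √(4 * t + 9) := by
    rw [Real.lt_sqrt (by norm_num)]
    have : (1 : ℝ) ≤ t := by exact_mod_cast ht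
    linarith
  rw [p0, div_lt_one (by linarith)]
  linarith

lemma one_div_one_sub_p0_pow_mul_lt_half {t d : ℕ} (ht : 241 ≤ t) (hd : √t / 2 - 5 / 4 ≤ d) :
    (1 / (1 - p0 t)) ^ t * (p0 t / (1 - p0 t)) ^ d < 1 / 2 := by
  set S := √(4 * t + 9) with hSdef
  have hS : S ^ 2 = 4 * t + 9 := Real.sq_sqrt (by positivity)
  have hS973 : 31.1928 ≤ S := by
    rw [hSdef, Real.le_sqrt (by norm_num) (by positivity)]
    have : (241 : ℝ) ≤ t := by exact_mod_cast ht
    linarith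
  obtain ⟨r, hSr⟩ : ∃ r : ℝ, S = 2 * r + 3 := ⟨(S - 3) / 2, by ring⟩
  have hr : 14.0964 ≤ r := by linarith
  have htr : (t : ℝ) = r ^ 2 + 3 * r := by
    rw [hSr] at hS
    linear_combination -hS / 4
  have hp0 : p0 t = 1 / (r + 1) := by
    rw [p0, ← hSdef, hSr, show 2 * r + 3 - 1 = 2 * (r + 1) by ring,
      div_mul_cancel_left₀ two_ne_zero, one_div]
  have hq : 1 - p0 t = r / (r + 1) := by
    rw [hp0]
    field_simp
    ring
  rw [hq, hp0, one_div_div, div_div_div_cancel_right₀ (by linarith), add_div,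
    div_self (by linarith)]
  refine one_add_inv_pow_mul_inv_pow_lt_half hr htr ?_
  have hsqrt := sub_le_sqrt_sq_add (by linarith : 3 / 8 ≤ r)
  rw [← htr] at hsqrt
  have : 9 / (16 * r) = 9 / (8 * r) / 2 := by field_simp; ring
  linarith

lemma div_one_sub_pow_add_le {p p' : ℝ} (hp : 0 ≤ p) (hpp' : p ≤ p') (hp' : p' < 1) (t d : ℕ) :
    (p / (1 - p)) ^ (t + d) ≤ p ^ t * ((1 / (1 - p')) ^ t * (p' / (1 - p')) ^ d) := by
  have hq : 0 < 1 - p := by linarith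
  calc (p / (1 - p)) ^ (t + d) = p ^ t * ((1 / (1 - p)) ^ t * (p / (1 - p)) ^ d) := by
        rw [pow_add, div_eq_mul_one_div p, mul_pow]
        ring
    _ ≤ _ := by
        have := hp.trans hpp'
        gcongr

theorem stmt_18 (n t : ℕ) (ht : 241 ≤ t) (H : Finset (Finset ℕ))
    (hH : ∀ A ∈ H, A ⊆ Finset.Icc 1 n)
    (hint : RWise 2 (⌈(t : ℝ) + Real.sqrt t / 2 - 5 / 4⌉₊) H)
    (p : ℝ) (hp : 0 < p) (hp0 : p ≤ p0 t) :
    mu p n H < (1 / 2) * p ^ t := by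
  set d := ⌈√t / 2 - 5 / 4⌉₊
  have hs : ⌈(t : ℝ) + √t / 2 - 5 / 4⌉₊ = t + d := by
    have : (5 / 2 : ℝ) ≤ √t := Real.le_sqrt_of_sq_le <| by
      have : (241 : ℝ) ≤ t := by exact_mod_cast ht
      linarith
    rw [add_sub_assoc, add_comm, Nat.ceil_add_natCast (by linarith), add_comm]
  have hp0_lt : p0 t < 1 := p0_lt_one (by omega)
  calc mu p n H ≤ (p / (1 - p)) ^ (t + d) :=
        hs ▸ mu_le_of_rwise_two hp.le (hp0.trans_lt hp0_lt) hH hint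
    _ ≤ p ^ t * ((1 / (1 - p0 t)) ^ t * (p0 t / (1 - p0 t)) ^ d) :=
        div_one_sub_pow_add_le hp.le hp0 hp0_lt t d
    _ < p ^ t * (1 / 2) := by
        gcongr
        exact one_div_one_sub_p0_pow_mul_lt_half ht (Nat.le_ceil _)
    _ = 1 / 2 * p ^ t := mul_comm _ _
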